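/- Let p ∈ NC(k,l), q ∈ NC(l,m), let C be a non-trivial (p,q)-connected component, and define S_p(C) (resp. S_q(C)) as the set of middle points x in the interval [min(C∩[l]), max(C∩[l])] lying strictly outside the middle-row interval of every block of p (resp. q) belonging to C. Then S_p(C) and S_q(C) are disjoint. -/

import Mathlib

/-!
Suppose `x` lies in both `S_p(C)` and `S_q(C)`. Then every block of `p ∪ q` meeting `C` has its
middle-row points all to the left or all to the right of `x`. Overlapping blocks of the same
partition coincide, and a `p`-block can meet a `q`-block only in the middle row, so this side is
the same for any two overlapping blocks meeting `C`. Propagating it along a chain inside `C` from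
a middle point `≤ x` to a middle point `≥ x` of `C` gives a contradiction.
-/

namespace Stmt10

/-- Two points of the three-row diagram (rows `0`, `1`, `2`) are related if they are
joined by a finite chain of pairwise-overlapping blocks of `p ⊔ q`. -/
def ChainRel (p q : Set (Set (ℕ × ℕ))) (a b : ℕ × ℕ) : Prop :=
  ∃ (n : ℕ) (Bs : Fin (n + 1) → Set (ℕ × ℕ)),
    (∀ i, Bs i ∈ p ∪ q) ∧ a ∈ Bs 0 ∧ b ∈ Bs (Fin.last n) ∧
      ∀ i : Fin n, (Bs i.castSucc ∩ Bs i.succ).Nonempty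

/-- `x` lies in the middle-row interval `[min (S ∩ [l]), max (S ∩ [l])]` of `S`. -/
def InMidInterval (S : Set (ℕ × ℕ)) (x : ℕ) : Prop :=
  (∃ y ∈ S, y.1 = 1 ∧ y.2 ≤ x) ∧ ∃ z ∈ S, z.1 = 1 ∧ x ≤ z.2

/-- `S_r(C)`: middle points of the interval of `C` lying strictly outside the
middle-row interval of every block of the partition `r` that meets `C`. -/
def Sside (r : Set (Set (ℕ × ℕ))) (C : Set (ℕ × ℕ)) (x : ℕ) : Prop :=
  InMidInterval C x ∧ ∀ D ∈ r, (D ∩ C).Nonempty → ¬ InMidInterval D x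

open Relation

theorem eq_or_mem_inter_of_mem_of_mem {α : Type*} {p q : Set (Set α)} {X Y : Set α}
    (hpX : ∀ B ∈ p, B ⊆ X) (hqY : ∀ B ∈ q, B ⊆ Y)
    (hp : ∀ x ∈ X, ∃! B, B ∈ p ∧ x ∈ B) (hq : ∀ y ∈ Y, ∃! B, B ∈ q ∧ y ∈ B)
    {B B' : Set α} (hB : B ∈ p ∪ q) (hB' : B' ∈ p ∪ q) {c : α} (hc : c ∈ B) (hc' : c ∈ B') :
    B = B' ∨ c ∈ X ∩ Y := by
  rcases hB with hB | hB <;> rcases hB' with hB' | hB'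
  · exact .inl ((hp c (hpX B hB hc)).unique ⟨hB, hc⟩ ⟨hB', hc'⟩)
  · exact .inr ⟨hpX B hB hc, hqY B' hB' hc'⟩
  · exact .inr ⟨hpX B' hB' hc', hqY B hB hc⟩
  · exact .inl ((hq c (hqY B hB hc)).unique ⟨hB, hc⟩ ⟨hB', hc'⟩)

section Chains

variable {p q : Set (Set (ℕ × ℕ))}

def SameBlock (p q : Set (Set (ℕ × ℕ))) (u v : ℕ × ℕ) : Prop :=
  ∃ B ∈ p ∪ q, u ∈ B ∧ v ∈ B

instance : Std.Symm (SameBlock p q) where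
  symm _ _ := fun ⟨B, hB, hu, hv⟩ => ⟨B, hB, hv, hu⟩

theorem ChainRel.reflTransGen {a b : ℕ × ℕ} (h : ChainRel p q a b) :
    ReflTransGen (SameBlock p q) a b := by
  obtain ⟨n, Bs, hBs, ha, hb, hov⟩ := h
  induction n generalizing a with
  | zero => exact .single ⟨Bs 0, hBs 0, ha, hb⟩
  | succ n ih =>
    obtain ⟨w, hw₀, hw₁⟩ := hov 0
    exact .head ⟨Bs 0, hBs 0, ha, hw₀⟩
      (ih (Bs ∘ Fin.succ) (fun _ => hBs _) hw₁ hb fun i => hov i.succ)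

theorem ChainRel.tail {a b c : ℕ × ℕ} (h : ChainRel p q a b) (hbc : SameBlock p q b c) :
    ChainRel p q a c := by
  obtain ⟨n, Bs, hBs, ha, hb, hov⟩ := h
  obtain ⟨B, hB, hbB, hcB⟩ := hbc
  refine ⟨n + 1, Fin.snoc Bs B, ?_, ?_, by simpa using hcB, ?_⟩
  · refine Fin.lastCases ?_ fun i => ?_
    · simpa using hB
    · simpa using hBs i
  · rw [← Fin.castSucc_zero, Fin.snoc_castSucc]
    exact ha
  · refine Fin.lastCases ⟨b, ?_, ?_⟩ fun i => ?_
    · simpa using hb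
    · simpa [Fin.succ_last] using hbB
    · rw [Fin.succ_castSucc, Fin.snoc_castSucc, Fin.snoc_castSucc]
      exact hov i

end Chains

def MidLeftOf (B : Set (ℕ × ℕ)) (x : ℕ) : Prop :=
  ∀ w ∈ B, w.1 = 1 → w.2 < x

theorem midLeftOf_of_not_inMidInterval {B : Set (ℕ × ℕ)} {x : ℕ} (hB : ¬ InMidInterval B x)
    {w : ℕ × ℕ} (hw : w ∈ B) (hw₁ : w.1 = 1) (hwx : w.2 ≤ x) : MidLeftOf B x := by
  intro v hv hv₁
  by_contra! hxv
  exact hB ⟨⟨w, hw, hw₁, hwx⟩, v, hv, hv₁, hxv⟩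

theorem midLeftOf_of_reflTransGen {p q : Set (Set (ℕ × ℕ))} {C : Set (ℕ × ℕ)} {x : ℕ}
    (hoverlap : ∀ B ∈ p ∪ q, ∀ B' ∈ p ∪ q, ∀ c ∈ B, c ∈ B' → B = B' ∨ c.1 = 1)
    (havoid : ∀ B ∈ p ∪ q, ∀ b ∈ B, b ∈ C → ¬ InMidInterval B x)
    (hC : ∀ b c, b ∈ C → SameBlock p q b c → c ∈ C)
    {y z : ℕ × ℕ} (hyz : ReflTransGen (SameBlock p q) y z)
    (hy : y ∈ C) (hy₁ : y.1 = 1) (hyx : y.2 ≤ x) :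
    ∀ B ∈ p ∪ q, z ∈ B → MidLeftOf B x := by
  suffices z ∈ C ∧ ∀ B ∈ p ∪ q, z ∈ B → MidLeftOf B x from this.2
  induction hyz with
  | refl =>
    exact ⟨hy, fun B hB hyB => midLeftOf_of_not_inMidInterval (havoid B hB y hyB hy) hyB hy₁ hyx⟩
  | @tail b c _ hbc ih =>
    obtain ⟨hb, hleft⟩ := ih
    have hc := hC b c hb hbc
    obtain ⟨B₀, hB₀, hbB₀, hcB₀⟩ := hbc
    refine ⟨hc, fun B hB hcB => ?_⟩
    rcases hoverlap B₀ hB₀ B hB c hcB₀ hcB with rfl | hc₁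
    · exact hleft B₀ hB₀ hbB₀
    · exact midLeftOf_of_not_inMidInterval (havoid B hB c hcB hc) hcB hc₁
        (hleft B₀ hB₀ hbB₀ c hcB₀ hc₁).le

theorem stmt10 (k l m : ℕ) (p q : Set (Set (ℕ × ℕ)))
    (hpsub : ∀ B ∈ p, B ⊆ {x : ℕ × ℕ |
      (x.1 = 0 ∧ 1 ≤ x.2 ∧ x.2 ≤ k) ∨ (x.1 = 1 ∧ 1 ≤ x.2 ∧ x.2 ≤ l)})
    (hqsub : ∀ B ∈ q, B ⊆ {x : ℕ × ℕ |
      (x.1 = 1 ∧ 1 ≤ x.2 ∧ x.2 ≤ l) ∨ (x.1 = 2 ∧ 1 ≤ x.2 ∧ x.2 ≤ m)})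
    (hppart : ∀ x : ℕ × ℕ,
      ((x.1 = 0 ∧ 1 ≤ x.2 ∧ x.2 ≤ k) ∨ (x.1 = 1 ∧ 1 ≤ x.2 ∧ x.2 ≤ l)) →
        ∃! B, B ∈ p ∧ x ∈ B)
    (hqpart : ∀ x : ℕ × ℕ,
      ((x.1 = 1 ∧ 1 ≤ x.2 ∧ x.2 ≤ l) ∨ (x.1 = 2 ∧ 1 ≤ x.2 ∧ x.2 ≤ m)) →
        ∃! B, B ∈ q ∧ x ∈ B)
    (C : Set (ℕ × ℕ)) (a : ℕ × ℕ) (hCa : C = {b | ChainRel p q a b}) :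
    ∀ x : ℕ, ¬ (Sside p C x ∧ Sside q C x) := by
  rintro x ⟨⟨⟨⟨y, hyC, hy₁, hyx⟩, z, hzC, hz₁, hxz⟩, hp⟩, -, hq⟩
  have hoverlap : ∀ B ∈ p ∪ q, ∀ B' ∈ p ∪ q, ∀ c ∈ B, c ∈ B' → B = B' ∨ c.1 = 1 := by
    intro B hB B' hB' c hc hc'
    refine (eq_or_mem_inter_of_mem_of_mem hpsub hqsub hppart hqpart hB hB' hc hc').imp_right ?_
    rintro ⟨h | h, h' | h'⟩ <;> omega
  have havoid : ∀ B ∈ p ∪ q, ∀ b ∈ B, b ∈ C → ¬ InMidInterval B x := by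
    rintro B (hB | hB) b hbB hbC
    exacts [hp B hB ⟨b, hbB, hbC⟩, hq B hB ⟨b, hbB, hbC⟩]
  subst hCa
  have hyz : ReflTransGen (SameBlock p q) y z := (symm hyC.reflTransGen).trans hzC.reflTransGen
  obtain ⟨n, Bs, hBs, -, hzB, -⟩ := hzC
  have hzx := midLeftOf_of_reflTransGen hoverlap havoid (fun _ _ => ChainRel.tail) hyz hyC hy₁ hyx
    (Bs (Fin.last n)) (hBs _) hzB z hzB hz₁
  omega

end Stmt10
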